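/- arXiv:1612.02910 — 4 statements merged into one kernel-verified Lean document; each statement's English description precedes it below -/
import Mathlib

section
/- Let G be a finite group, χ the character of a finite-dimensional complex representation of G, and H a subgroup of G such that χ(h) ≠ 0 for every h ∈ H. If g₁, …, g_k are elements of G such that χ(g_j · g_i⁻¹) = 0 for all i ≠ j, then k ≤ [G : H], the index of H in G. -/
open CategoryTheory

theorem Subgroup.card_le_index_of_pairwise_mul_inv_notMem {G ι : Type*} [Group G]
    (H : Subgroup G) [H.FiniteIndex] (g : ι → G)
    (hg : Pairwise fun i j => g j * (g i)⁻¹ ∉ H) :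
    Nat.card ι ≤ H.index := by
  -- `g j * (g i)⁻¹ ∈ H` says exactly that `(g i)⁻¹` and `(g j)⁻¹` lie in the same left coset.
  have hinj : Function.Injective fun i => (QuotientGroup.mk (g i)⁻¹ : G ⧸ H) := by
    intro i j hij
    by_contra hne
    exact hg (Ne.symm hne) (by simpa using QuotientGroup.eq.mp hij)
  exact Nat.card_le_card_of_injective _ hinj

/-- If `χ` is the character of a finite-dimensional complex representation of a finite group `G`,
`H` is a subgroup on which `χ` never vanishes, and `g₁, …, g_k` are elements of `G` with
`χ(g_j g_i⁻¹) = 0` for all `i ≠ j`, then `k ≤ [G : H]`. -/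
theorem card_le_index_of_character
    {G : Type} [Group G] [Finite G]
    (V : FDRep ℂ G) (H : Subgroup G)
    (hH : ∀ h ∈ H, V.character h ≠ 0)
    {k : ℕ} (g : Fin k → G)
    (hg : ∀ i j : Fin k, i ≠ j → V.character (g j * (g i)⁻¹) = 0) :
    k ≤ H.index := by
  have hg_notMem : Pairwise fun i j => g j * (g i)⁻¹ ∉ H :=
    fun i j hij hmem => hH _ hmem (hg i j hij)
  simpa using H.card_le_index_of_pairwise_mul_inv_notMem g hg_notMem
end

section
/- Let G be a finite group and χ an irreducible complex character of G. Suppose there exists a subgroup H of G such that χ(h) ≠ 0 for every h ∈ H and [G : H] < χ(1)². Then there do not exist χ(1)² elements g₁, …, g_{χ(1)²} of G satisfying χ(g_j · g_i⁻¹) = 0 for all i ≠ j. (This is the character-level form of: if some α ∈ Γ_{m,n} has trivial stabilizer G_α = {e}, then the symmetry class V_χ(G) admits no orthogonal ∗-basis.) -/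
open CategoryTheory

theorem Subgroup.exists_ne_mul_inv_mem_of_index_lt {G ι : Type*} [Group G] (H : Subgroup G)
    [H.FiniteIndex] (g : ι → G) (hcard : H.index < Nat.card ι) :
    ∃ i j, i ≠ j ∧ g i * (g j)⁻¹ ∈ H := by
  have hnotinj : ¬ Function.Injective fun i ↦ (((g i)⁻¹ : G) : G ⧸ H) := fun hinj ↦
    (Nat.card_le_card_of_injective _ hinj).not_gt hcard
  simp only [Function.Injective, not_forall] at hnotinj
  obtain ⟨i, j, hcoset, hij⟩ := hnotinj
  exact ⟨i, j, hij, by simpa using QuotientGroup.eq.mp hcoset⟩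

theorem no_orthogonal_family_of_index_lt_degree_sq_general
    {G : Type} [Group G] [Finite G]
    (V : FDRep ℂ G) (H : Subgroup G)
    (hH : ∀ h ∈ H, V.character h ≠ 0)
    (hind : H.index < (Module.finrank ℂ V) ^ 2) :
    ¬ ∃ g : Fin ((Module.finrank ℂ V) ^ 2) → G,
        ∀ i j, i ≠ j → V.character (g j * (g i)⁻¹) = 0 := by
  rintro ⟨g, hg⟩
  obtain ⟨i, j, hij, hmem⟩ := H.exists_ne_mul_inv_mem_of_index_lt g (by simpa using hind)
  exact hH _ hmem (hg j i hij.symm)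

/-- Let `χ` be an irreducible complex character of a finite group `G`.  If there is a subgroup
`H` of `G` with `χ(h) ≠ 0` for all `h ∈ H` and `[G : H] < χ(1)²`, then there do not exist
`χ(1)²` elements `g₁, …, g_{χ(1)²}` of `G` with `χ(g_j g_i⁻¹) = 0` for all `i ≠ j`
(equivalently, `V_χ(G)` has no orthogonal ∗-basis when some `α` has trivial stabilizer). -/
theorem no_orthogonal_family_of_index_lt_degree_sq
    {G : Type} [Group G] [Finite G]
    (V : FDRep ℂ G) [Simple V] (H : Subgroup G)
    (hH : ∀ h ∈ H, V.character h ≠ 0)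
    (hind : H.index < (Module.finrank ℂ V) ^ 2) :
    ¬ ∃ g : Fin ((Module.finrank ℂ V) ^ 2) → G,
        ∀ i j, i ≠ j → V.character (g j * (g i)⁻¹) = 0 :=
  no_orthogonal_family_of_index_lt_degree_sq_general V H hH hind
end

section
/- Let s be an odd positive integer and let χ be an irreducible complex character of the dihedral group D_{2s} of order 2s. Then there exist χ(1)² elements g₁, …, g_{χ(1)²} of D_{2s} with χ(g_j · g_i⁻¹) = 0 for all i ≠ j if and only if χ(1) = 1. (Character-level form of: for dim V = n > 1, the symmetry class V_χ(D_{2s}) admits an orthogonal ∗-basis if and only if χ is linear.) -/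
/-!
An irreducible representation of `D_{2s}` has dimension at most two, since an eigenvector `v` of
the rotation `r 1` and its image under a reflection already span the orbit of `v`. In dimension two,
among any three group elements two lie in the same coset of the rotation subgroup, so some
`g j * (g i)⁻¹` is a rotation `ρ` with `ρ ^ s = 1`. By Cayley–Hamilton a traceless `2 × 2` matrix
squares to a scalar, so for odd `s` a traceless `ρ` would make `ρ ^ s = 1` traceless as well.
-/

open CategoryTheory

namespace FDRep

variable {k G : Type*} [Field k] [Monoid G]

theorem nontrivial_of_simple (V : FDRep k G) [Simple V] : Nontrivial V := by
  refine not_subsingleton_iff_nontrivial.1 fun _ => id_nonzero V ?_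
  exact Action.hom_ext _ _ (FGModuleCat.hom_ext (LinearMap.ext fun _ => Subsingleton.elim _ _))

theorem subrepresentation_eq_top_of_ne_bot (V : FDRep k G) [Simple V] (p : Subrepresentation V.ρ)
    (hp : p.toSubmodule ≠ ⊥) : p.toSubmodule = ⊤ := by
  let ι : FDRep.of p.toRepresentation ⟶ V :=
    { hom := FGModuleCat.ofHom p.toSubmodule.subtype
      comm := fun _ => rfl }
  have : Mono ι := ConcreteCategory.mono_of_injective ι Subtype.val_injective
  have hι : ι ≠ 0 := by
    obtain ⟨v, hv, hv0⟩ := Submodule.exists_mem_ne_zero_of_ne_bot hp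
    intro h
    exact hv0 (congrArg (fun f : FDRep.of p.toRepresentation ⟶ V => f.hom ⟨v, hv⟩) h)
  have : IsIso ι := isIso_of_mono_of_nonzero hι
  exact Submodule.eq_top_of_finrank_eq (isoToLinearEquiv (asIso ι)).finrank_eq

theorem span_orbit_eq_top (V : FDRep k G) [Simple V] {v : V} (hv : v ≠ 0) :
    Submodule.span k (Set.range fun g => V.ρ g v) = ⊤ := by
  refine subrepresentation_eq_top_of_ne_bot V
    { toSubmodule := Submodule.span k (Set.range fun g => V.ρ g v)
      apply_mem_toSubmodule := fun g w hw => ?_ } ?_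
  · have : Submodule.span k (Set.range fun g => V.ρ g v) ≤
        (Submodule.span k (Set.range fun g => V.ρ g v)).comap (V.ρ g) := by
      rw [Submodule.span_le]
      rintro _ ⟨h, rfl⟩
      exact Submodule.subset_span ⟨g * h, by simp⟩
    exact this hw
  · exact (Submodule.ne_bot_iff _).2 ⟨v, Submodule.subset_span ⟨1, by simp⟩, hv⟩

end FDRep

theorem Matrix.sq_eq_neg_det_smul_one_of_trace_eq_zero {R : Type*} [CommRing R]
    (A : Matrix (Fin 2) (Fin 2) R) (h : A.trace = 0) : A ^ 2 = -A.det • 1 := by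
  nontriviality R
  have := A.aeval_self_charpoly
  rw [A.charpoly_fin_two, h] at this
  simpa [Algebra.smul_def, sub_eq_zero, eq_neg_iff_add_eq_zero] using this

theorem Matrix.trace_ne_zero_of_pow_eq_one_of_odd {R : Type*} [CommRing R] [NeZero (2 : R)]
    {s : ℕ} (hs : Odd s) (A : Matrix (Fin 2) (Fin 2) R) (hA : A ^ s = 1) : A.trace ≠ 0 := by
  intro h
  obtain ⟨m, rfl⟩ := hs
  have : (1 : Matrix (Fin 2) (Fin 2) R) = (-A.det) ^ m • A := by
    rw [← hA, pow_succ, pow_mul, A.sq_eq_neg_det_smul_one_of_trace_eq_zero h, smul_pow, one_pow,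
      smul_mul_assoc, one_mul]
  have := congrArg Matrix.trace this
  rw [Matrix.trace_smul, h, smul_zero, Matrix.trace_one, Fintype.card_fin, Nat.cast_ofNat] at this
  exact two_ne_zero this

theorem LinearMap.trace_ne_zero_of_pow_eq_one_of_odd {K M : Type*} [Field K] [NeZero (2 : K)]
    [AddCommGroup M] [Module K M] (hM : Module.finrank K M = 2) {s : ℕ} (hs : Odd s)
    (f : Module.End K M) (hf : f ^ s = 1) : LinearMap.trace K M f ≠ 0 := by
  have := Module.finite_of_finrank_eq_succ hM
  let b := Module.finBasisOfFinrankEq K M hM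
  rw [LinearMap.trace_eq_matrix_trace K b]
  refine Matrix.trace_ne_zero_of_pow_eq_one_of_odd hs _ ?_
  change LinearMap.toMatrixAlgEquiv b f ^ s = 1
  rw [← map_pow, hf, map_one]

namespace DihedralGroup

variable {n : ℕ}

theorem exists_ne_mul_inv_eq_r {ι : Type*} [Fintype ι] (hι : 2 < Fintype.card ι)
    (g : ι → DihedralGroup n) : ∃ i j, i ≠ j ∧ ∃ k, g j * (g i)⁻¹ = r k := by
  let isReflection : DihedralGroup n → Bool := fun | .r _ => false | .sr _ => true
  obtain ⟨i, j, hij, h⟩ :=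
    Fintype.exists_ne_map_eq_of_card_lt (isReflection ∘ g) (by simpa using hι)
  refine ⟨i, j, hij, ?_⟩
  rcases hgi : g i with a | a <;> rcases hgj : g j with b | b <;>
    simp [isReflection, hgi, hgj] at h ⊢

theorem finrank_le_two_of_simple [NeZero n] (V : FDRep ℂ (DihedralGroup n)) [Simple V] :
    Module.finrank ℂ V ≤ 2 := by
  have := V.nontrivial_of_simple
  obtain ⟨c, v, hv⟩ := (Module.End.exists_eigenvalue (V.ρ (r 1))).imp
    fun _ hc => hc.exists_hasEigenvector
  have hr : ∀ j, V.ρ (r j) v = c ^ j.val • v := fun j => by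
    rw [← hv.pow_apply, ← map_pow, r_one_pow, ZMod.natCast_zmod_val]
  have horbit : Submodule.span ℂ (Set.range fun g => V.ρ g v) ≤
      Submodule.span ℂ (Set.range ![v, V.ρ (sr 0) v]) := by
    rw [Submodule.span_le]
    rintro _ ⟨g | j, rfl⟩
    all_goals dsimp only
    · rw [hr]
      exact Submodule.smul_mem _ _ (Submodule.subset_span ⟨0, rfl⟩)
    · rw [show sr j = sr 0 * r j by simp, map_mul, Module.End.mul_apply, hr, map_smul]
      exact Submodule.smul_mem _ _ (Submodule.subset_span ⟨1, rfl⟩)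
  calc Module.finrank ℂ V = Module.finrank ℂ (⊤ : Submodule ℂ V) := (finrank_top ℂ V).symm
    _ ≤ Module.finrank ℂ (Submodule.span ℂ (Set.range ![v, V.ρ (sr 0) v])) := by
      rw [← V.span_orbit_eq_top hv.2]
      exact Submodule.finrank_mono horbit
    _ ≤ 2 := (finrank_range_le_card _).trans_eq (Fintype.card_fin 2)

theorem character_r_ne_zero (hn : Odd n) (V : FDRep ℂ (DihedralGroup n))
    (hV : Module.finrank ℂ V = 2) (k : ZMod n) : V.character (r k) ≠ 0 := by
  unfold FDRep.character
  refine LinearMap.trace_ne_zero_of_pow_eq_one_of_odd hV hn _ ?_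
  rw [← map_pow, r_pow, ZMod.natCast_self, mul_zero, ← one_def, map_one]

end DihedralGroup

open DihedralGroup in
theorem dihedral_orthogonal_family_iff_linear_general
    {s : ℕ} (hs : Odd s)
    (V : FDRep ℂ (DihedralGroup s)) [Simple V] :
    (∃ g : Fin ((Module.finrank ℂ V) ^ 2) → DihedralGroup s,
        ∀ i j, i ≠ j → V.character (g j * (g i)⁻¹) = 0) ↔ Module.finrank ℂ V = 1 := by
  have : NeZero s := ⟨hs.pos.ne'⟩
  constructor
  · rintro ⟨g, hg⟩
    by_contra h1
    have := V.nontrivial_of_simple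
    have h2 : Module.finrank ℂ V = 2 := by
      have := Module.finrank_pos (R := ℂ) (M := V)
      have := finrank_le_two_of_simple V
      omega
    obtain ⟨i, j, hij, k, hk⟩ := exists_ne_mul_inv_eq_r (by simp [h2]) g
    exact character_r_ne_zero hs V h2 k (hk ▸ hg i j hij)
  · intro h
    rw [h, one_pow]
    exact ⟨fun _ => 1, fun i j hij => absurd (Subsingleton.elim i j) hij⟩

/-- Let `s` be an odd positive integer and `χ` an irreducible complex character of the dihedral
group `D_{2s}`.  Then there exist `χ(1)²` elements `g₁, …, g_{χ(1)²}` of `D_{2s}` with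
`χ(g_j g_i⁻¹) = 0` for all `i ≠ j` iff `χ(1) = 1` (the character-level form of:
`V_χ(D_{2s})` admits an o*-basis iff `χ` is linear). -/
theorem dihedral_orthogonal_family_iff_linear
    {s : ℕ} (hs : Odd s) (hs' : 0 < s)
    (V : FDRep ℂ (DihedralGroup s)) [Simple V] :
    (∃ g : Fin ((Module.finrank ℂ V) ^ 2) → DihedralGroup s,
        ∀ i j, i ≠ j → V.character (g j * (g i)⁻¹) = 0) ↔ Module.finrank ℂ V = 1 :=
  dihedral_orthogonal_family_iff_linear_general hs V
end

section
/- Let p and q be primes with p dividing q − 1, let G be a non-abelian group of order p·q, and let χ be an irreducible complex character of G. Then there exist χ(1)² elements g₁, …, g_{χ(1)²} of G with χ(g_j · g_i⁻¹) = 0 for all i ≠ j if and only if χ(1) = 1. (Character-level form of: for dim V = n > 1, the symmetry class V_χ(G) admits an orthogonal ∗-basis if and only if χ is linear.) -/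
/-!
If `x ^ ℓ = 1` for a prime `ℓ` and `χ(x) = 0`, then `χ(x)` is a vanishing sum of `χ(1)` many
`ℓ`-th roots of unity `ζ ^ eᵢ`; the cyclotomic polynomial `Φ_ℓ` divides `∑ X ^ eᵢ` over `ℤ`, and
evaluating at `1` gives `ℓ ∣ χ(1)`.

A family with `χ(g_j g_i⁻¹) = 0` for `i ≠ j` meets every right coset of a subgroup `H` on which
`χ` does not vanish at most once, so `χ(1)² ≤ [G : H]`. Taking `H = 1` gives `χ(1)² ≤ pq`, hence
`q ∤ χ(1)` as `p < q`; taking `H` of order `q` then gives `χ(1)² ≤ p`. If `χ(1) ≥ 2`, the family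
has two members, and their quotient has order `p` or `q` because `G` is not cyclic, so `p ∣ χ(1)`,
which is incompatible with `χ(1)² ≤ p`.
-/

open CategoryTheory Polynomial

theorem Multiset.prime_dvd_card_of_sum_eq_zero {ℓ : ℕ} (hℓ : ℓ.Prime) {S : Multiset ℂ}
    (hS : ∀ μ ∈ S, μ ^ ℓ = 1) (hsum : S.sum = 0) : ℓ ∣ S.card := by
  have : Fact ℓ.Prime := ⟨hℓ⟩
  have hζ := Complex.isPrimitiveRoot_exp ℓ hℓ.ne_zero
  set ζ := Complex.exp (2 * Real.pi * Complex.I / ℓ)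
  choose! e he using fun μ (hμ : μ ∈ S) => hζ.eq_pow_of_pow_eq_one (hS μ hμ)
  set P : ℤ[X] := (S.map fun μ => X ^ e μ).sum
  have hPζ : aeval ζ P = 0 := by
    calc aeval ζ P = (S.map fun μ => ζ ^ e μ).sum := by
          simp [P, map_multiset_sum, Multiset.map_map]
    _ = S.sum := by rw [Multiset.map_congr rfl fun μ hμ => (he μ hμ).2, Multiset.map_id']
    _ = 0 := hsum
  obtain ⟨C, hC⟩ : cyclotomic ℓ ℤ ∣ P :=
    cyclotomic_eq_minpoly hζ hℓ.pos ▸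
      minpoly.isIntegrallyClosed_dvd (hζ.isIntegral hℓ.pos) hPζ
  have hP1 : P.eval 1 = S.card := by
    rw [← coe_evalRingHom, map_multiset_sum, Multiset.map_map]
    simp
  have : (ℓ : ℤ) ∣ S.card := by
    rw [← hP1, hC, eval_mul, eval_one_cyclotomic_prime]
    exact dvd_mul_right _ _
  exact_mod_cast this

theorem Module.End.exists_trace_eq_sum_of_pow_eq_one {K V : Type*} [Field K] [IsAlgClosed K]
    [AddCommGroup V] [Module K V] [FiniteDimensional K V] {f : Module.End K V} {n : ℕ}
    (hf : f ^ n = 1) :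
    ∃ S : Multiset K, S.card = Module.finrank K V ∧ (∀ μ ∈ S, μ ^ n = 1) ∧
      LinearMap.trace K V f = S.sum := by
  have hsplit : f.charpoly.Splits := IsAlgClosed.splits _
  refine ⟨f.charpoly.roots, ?_, fun μ hμ => ?_, trace_eq_sum_roots_charpoly_of_splits hsplit⟩
  · rw [← f.charpoly_natDegree, splits_iff_card_roots.mp hsplit]
  · have hμ' : f.HasEigenvalue μ :=
      (hasEigenvalue_iff_isRoot_charpoly f μ).mpr (isRoot_of_mem_roots hμ)
    obtain ⟨v, hv⟩ := (hμ'.pow n).exists_hasEigenvector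
    have hvv := hv.apply_eq_smul
    rw [hf, one_apply] at hvv
    exact smul_left_injective K hv.2 (by simpa using hvv.symm)

theorem FDRep.prime_dvd_finrank_of_character_eq_zero {G : Type*} [Monoid G] (V : FDRep ℂ G)
    {ℓ : ℕ} (hℓ : ℓ.Prime) {x : G} (hx : x ^ ℓ = 1) (hχ : V.character x = 0) :
    ℓ ∣ Module.finrank ℂ V := by
  obtain ⟨S, hcard, hroots, hsum⟩ :=
    Module.End.exists_trace_eq_sum_of_pow_eq_one (f := V.ρ x) (by rw [← map_pow, hx, map_one])
  exact hcard ▸ Multiset.prime_dvd_card_of_sum_eq_zero hℓ hroots (hsum ▸ hχ)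

theorem FDRep.finrank_ne_zero_of_simple {k G : Type*} [Field k] [Monoid G] (V : FDRep k G)
    [Simple V] : Module.finrank k V ≠ 0 := by
  intro h
  have : Subsingleton V := Module.finrank_zero_iff.mp h
  exact id_nonzero V (Action.hom_ext _ _ (by ext x; exact Subsingleton.elim _ _))

theorem pow_eq_one_or_pow_eq_one_of_card_eq_mul {G : Type*} [Group G] [Finite G] {p q : ℕ}
    (hp : p.Prime) (hq : q.Prime) (hG : Nat.card G = p * q) (hcyc : ¬IsCyclic G) (x : G) :
    x ^ p = 1 ∨ x ^ q = 1 := by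
  obtain ⟨a, b, ha, hb, hab⟩ := Nat.dvd_mul.mp (hG ▸ orderOf_dvd_natCard x)
  rcases (Nat.dvd_prime hp).mp ha with rfl | rfl
  · right
    rw [← orderOf_dvd_iff_pow_eq_one, ← hab, one_mul]
    exact hb
  · rcases (Nat.dvd_prime hq).mp hb with rfl | rfl
    · left
      rw [← orderOf_dvd_iff_pow_eq_one, ← hab, mul_one]
    · exact absurd (isCyclic_of_orderOf_eq_card x (hab.symm.trans hG.symm)) hcyc

theorem Subgroup.card_le_index_of_mul_inv_notMem {G ι : Type*} [Group G] (H : Subgroup G)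
    [H.FiniteIndex] {g : ι → G} (hg : ∀ i j, i ≠ j → g j * (g i)⁻¹ ∉ H) :
    Nat.card ι ≤ H.index := by
  rw [H.index_eq_card]
  refine Nat.card_le_card_of_injective (fun i => (((g i)⁻¹ : G) : G ⧸ H)) fun i j hij => ?_
  by_contra hne
  exact hg j i (Ne.symm hne) (by simpa using QuotientGroup.eq.mp hij)

theorem exists_subgroup_index_eq_forall_pow_eq_one {G : Type*} [Group G] [Finite G] {p q : ℕ}
    (hq : q.Prime) (hG : Nat.card G = p * q) :
    ∃ Q : Subgroup G, Q.index = p ∧ ∀ y ∈ Q, y ^ q = 1 := by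
  obtain ⟨x, hx⟩ := exists_prime_orderOf_dvd_card' (hp := ⟨hq⟩) q (hG ▸ dvd_mul_left q p)
  refine ⟨Subgroup.zpowers x, ?_, fun y hy => ?_⟩
  · have := (Subgroup.zpowers x).index_mul_card
    rw [Nat.card_zpowers, hx, hG] at this
    exact Nat.eq_of_mul_eq_mul_right hq.pos this
  · exact orderOf_dvd_iff_pow_eq_one.mp
      (hx ▸ Nat.card_zpowers x ▸ Subgroup.orderOf_dvd_natCard _ hy)

/-- Let `p`, `q` be primes with `p ∣ q - 1`, `G` a non-abelian group of order `p·q`, and `χ` an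
irreducible complex character of `G`.  Then there exist `χ(1)²` elements `g₁, …, g_{χ(1)²}` of
`G` with `χ(g_j g_i⁻¹) = 0` for all `i ≠ j` iff `χ(1) = 1` (the character-level form of:
`V_χ(G)` admits an o*-basis iff `χ` is linear). -/
theorem pq_group_orthogonal_family_iff_linear
    {p q : ℕ} (hp : p.Prime) (hq : q.Prime) (hpq : p ∣ q - 1)
    {G : Type} [Group G] [Finite G]
    (hG : Nat.card G = p * q)
    (hnab : ∃ a b : G, a * b ≠ b * a)
    (V : FDRep ℂ G) [Simple V] :
    (∃ g : Fin ((Module.finrank ℂ V) ^ 2) → G,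
        ∀ i j, i ≠ j → V.character (g j * (g i)⁻¹) = 0) ↔ Module.finrank ℂ V = 1 := by
  have hd : Module.finrank ℂ V ≠ 0 := V.finrank_ne_zero_of_simple
  set d := Module.finrank ℂ V
  refine ⟨fun ⟨g, hg⟩ => ?_, fun hd1 => ?_⟩
  swap
  · have : Subsingleton (Fin (d ^ 2)) := Fin.subsingleton_iff_le_one.mpr (by simp [hd1])
    exact ⟨fun _ => 1, fun i j hij => absurd (Subsingleton.elim i j) hij⟩
  have hcard_le_index (H : Subgroup G) (hH : ∀ y ∈ H, V.character y ≠ 0) :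
      d ^ 2 ≤ H.index := by
    simpa using H.card_le_index_of_mul_inv_notMem fun i j hij hmem => hH _ hmem (hg i j hij)
  have hd_sq_le : d ^ 2 ≤ p * q :=
    hG ▸ Subgroup.index_bot (G := G) ▸ hcard_le_index ⊥ (by simpa [FDRep.char_one] using hd)
  have hp_lt_q : p < q :=
    (Nat.le_sub_one_iff_lt hq.pos).mp (Nat.le_of_dvd (Nat.sub_pos_of_lt hq.one_lt) hpq)
  have hq_not_dvd : ¬q ∣ d := fun h => by
    have := Nat.le_of_dvd (Nat.pos_of_ne_zero hd) h
    nlinarith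
  obtain ⟨Q, hQ_index, hQ_pow⟩ := exists_subgroup_index_eq_forall_pow_eq_one (G := G) hq hG
  have hd_sq_le_p : d ^ 2 ≤ p := hQ_index ▸ hcard_le_index Q fun y hy hy0 =>
    hq_not_dvd (V.prime_dvd_finrank_of_character_eq_zero hq (hQ_pow y hy) hy0)
  by_contra hd1
  have hd2 : 2 ≤ d := by omega
  have : Nontrivial (Fin (d ^ 2)) := Fin.nontrivial_iff_two_le.mpr (by nlinarith)
  obtain ⟨i, j, hij⟩ := exists_pair_ne (Fin (d ^ 2))
  have hcyc : ¬IsCyclic G := fun _ => by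
    obtain ⟨a, b, hab⟩ := hnab
    exact hab (IsCyclic.commGroup.mul_comm a b)
  rcases pow_eq_one_or_pow_eq_one_of_card_eq_mul hp hq hG hcyc (g j * (g i)⁻¹) with h | h
  · have := Nat.le_of_dvd (Nat.pos_of_ne_zero hd)
      (V.prime_dvd_finrank_of_character_eq_zero hp h (hg i j hij))
    nlinarith
  · exact hq_not_dvd (V.prime_dvd_finrank_of_character_eq_zero hq h (hg i j hij))
end
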